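/- arXiv:1901.07844 — 2 statements merged into one kernel-verified Lean document; each statement's English description precedes it below -/
import Mathlib

section
/- Let 0<σ≤1 and 1/σ<p<∞. There is a constant C, depending only on p, such that for every g∈L^p(𝕋), the function A(g) satisfies (∫_𝔻 |A(g)(z)|^p dm(z))^{1/p} ≤ C (∫₀^{2π} |g(t)|^p dt)^{1/p}. -/
open MeasureTheory Metric Set
open scoped ENNReal

noncomputable section

/-- The operator `A(g)(z) = ∫₀^{2π} ((e^{it}+z)/(e^{it}-z)) g(t) dt` for `z` in the unit disk. -/
def Aop (g : ℝ → ℂ) (z : ℂ) : ℂ :=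
  ∫ t in (0:ℝ)..(2 * Real.pi),
    ((Complex.exp (t * Complex.I) + z) / (Complex.exp (t * Complex.I) - z)) * g t

/-!
Since `|e^{it} + z| ≤ 2`, `|A(g)(z)| ≤ 2 ∫ |g(t)| / |e^{it} - z| dt`, and Hölder's inequality with
the weight `1 / |e^{it} - z|` gives
`|A(g)(z)|^p ≲ (∫ |g(t)|^p / |e^{it} - z| dt) · (∫ dt / |e^{it} - z|)^{p-1}`.
For `z = |z| ζ` with `|ζ| = 1` and `0 ≤ a ≤ 1`, the lower bounds `1 - |z|` and `|e^{it} - ζ| / 2`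
of `|e^{it} - z|` combine into `|e^{it} - z| ≥ (1 - |z|)^a (|e^{it} - ζ| / 2)^{1-a}`. As
`|e^{it} - ζ|^{a-1}` is integrable on the circle, the last factor is `≲ (1 - |z|)^{-a(p-1)}`.
After exchanging the integrals over `𝔻` and `𝕋`, the same estimate in polar coordinates bounds
`∫_𝔻 (1 - |z|)^{-a(p-1)} / |e^{it} - z| dm(z)` by `∫₀¹ (1 - r)^{-ap} dr` times a circle integral,
and both are finite for `a = 1 / (2p)`.
-/

open Real

lemma ENNReal.rpow_neg_le_rpow_neg {x y : ℝ≥0∞} (h : x ≤ y) {s : ℝ} (hs : 0 ≤ s) :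
    y ^ (-s) ≤ x ^ (-s) := by
  rw [ENNReal.rpow_neg, ENNReal.rpow_neg]
  exact ENNReal.inv_le_inv.mpr (ENNReal.rpow_le_rpow h hs)

theorem lintegral_mul_rpow_le_lintegral_mul_rpow_mul {α : Type*} [MeasurableSpace α]
    {μ : Measure α} {p : ℝ} (hp : 1 < p) {w f : α → ℝ≥0∞} (hw : AEMeasurable w μ)
    (hf : AEMeasurable f μ) :
    (∫⁻ x, w x * f x ∂μ) ^ p ≤ (∫⁻ x, w x * f x ^ p ∂μ) * (∫⁻ x, w x ∂μ) ^ (p - 1) := by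
  set q := p.conjExponent
  have hpq : p.HolderConjugate q := .conjExponent hp
  have hp0 : 0 < p := hpq.pos
  have hq0 : 0 < q := hpq.symm.pos
  have holder := ENNReal.lintegral_mul_le_Lp_mul_Lq μ hpq
    ((hw.pow_const (1 / p)).mul hf) (hw.pow_const (1 / q))
  have split : ∀ x, w x ^ (1 / p) * f x * w x ^ (1 / q) = w x * f x := fun x => by
    rw [mul_right_comm, ← ENNReal.rpow_add_of_nonneg _ _ (by positivity) (by positivity),
      one_div, one_div, hpq.inv_add_inv_eq_one, ENNReal.rpow_one]
  have powp : ∀ x, (w x ^ (1 / p) * f x) ^ p = w x * f x ^ p := fun x => by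
    rw [ENNReal.mul_rpow_of_nonneg _ _ hp0.le, ← ENNReal.rpow_mul, one_div_mul_cancel hp0.ne',
      ENNReal.rpow_one]
  have powq : ∀ x, (w x ^ (1 / q)) ^ q = w x := fun x => by
    rw [← ENNReal.rpow_mul, one_div_mul_cancel hq0.ne', ENNReal.rpow_one]
  simp only [Pi.mul_apply, split, powp, powq] at holder
  calc (∫⁻ x, w x * f x ∂μ) ^ p
      ≤ ((∫⁻ x, w x * f x ^ p ∂μ) ^ (1 / p) * (∫⁻ x, w x ∂μ) ^ (1 / q)) ^ p :=
        ENNReal.rpow_le_rpow holder hp0.le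
    _ = (∫⁻ x, w x * f x ^ p ∂μ) * (∫⁻ x, w x ∂μ) ^ (p - 1) := by
        rw [ENNReal.mul_rpow_of_nonneg _ _ hp0.le, ← ENNReal.rpow_mul, ← ENNReal.rpow_mul,
          one_div_mul_cancel hp0.ne', ENNReal.rpow_one, one_div_mul_eq_div,
          hpq.div_conj_eq_sub_one]

lemma intervalIntegrable_abs_rpow {r : ℝ} (hr : -1 < r) (a b : ℝ) :
    IntervalIntegrable (fun t => |t| ^ r) volume a b := by
  suffices h : ∀ c : ℝ, IntervalIntegrable (fun t => |t| ^ r) volume 0 c from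
    (h a).symm.trans (h b)
  intro c
  rcases le_total 0 c with hc | hc
  · refine (intervalIntegral.intervalIntegrable_rpow' hr).congr fun t ht => ?_
    rw [uIoc_of_le hc] at ht
    simp [abs_of_pos ht.1]
  · have h := (intervalIntegral.intervalIntegrable_rpow' hr (a := 0) (b := -c)).comp_sub_left 0
    simp only [sub_zero, sub_neg_eq_add, zero_add] at h
    refine h.congr fun t ht => ?_
    rw [uIoc_of_ge hc] at ht
    simp [abs_of_nonpos ht.2]

lemma setLIntegral_ofReal_mul_abs_sub_rpow_neg_lt_top {s : ℝ} (hs : s < 1) {k : ℝ} (hk : 0 < k)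
    (c : ℝ) {a b : ℝ} (hab : a ≤ b) :
    ∫⁻ t in Ioc a b, ENNReal.ofReal (k * |t - c|) ^ (-s) < ⊤ := by
  have hint : IntegrableOn (fun t => k ^ (-s) * |t - c| ^ (-s)) (Ioc a b) := by
    rw [← intervalIntegrable_iff_integrableOn_Ioc_of_le hab]
    have h := (intervalIntegrable_abs_rpow (r := -s) (by linarith) (a - c) (b - c)).comp_sub_right c
    simp only [sub_add_cancel] at h
    exact h.const_mul _
  refine lt_of_eq_of_lt (setLIntegral_congr_fun_ae measurableSet_Ioc ?_) hint.lintegral_lt_top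
  filter_upwards [Measure.ae_ne volume c] with t ht _
  rw [ENNReal.ofReal_rpow_of_pos (by positivity [sub_ne_zero.mpr ht]),
    Real.mul_rpow hk.le (abs_nonneg _)]

lemma setLIntegral_Ioo_ofReal_one_sub_rpow_neg_lt_top {s : ℝ} (hs : s < 1) :
    ∫⁻ ρ in Ioo 0 1, ENNReal.ofReal (1 - ρ) ^ (-s) < ⊤ := by
  refine (lintegral_mono_set Ioo_subset_Ioc_self).trans_lt (lt_of_eq_of_lt
    (setLIntegral_congr_fun measurableSet_Ioc fun ρ hρ => ?_)
    (setLIntegral_ofReal_mul_abs_sub_rpow_neg_lt_top hs one_pos 1 zero_le_one))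
  rw [one_mul, abs_sub_comm, abs_of_nonneg (by linarith [hρ.2])]

lemma Function.Periodic.setLIntegral_Ioc_comp_sub {f : ℝ → ℝ≥0∞} {T : ℝ} (hT : 0 < T)
    (hf : Function.Periodic f T) (θ b c : ℝ) :
    ∫⁻ t in Ioc b (b + T), f (t - θ) = ∫⁻ t in Ioc c (c + T), f t := by
  have := Fact.mk hT
  have lift : ∀ b θ : ℝ, ∫⁻ t in Ioc b (b + T), f (t - θ)
      = ∫⁻ x : AddCircle T, hf.lift (x - (θ : AddCircle T)) := fun b θ => by
    rw [← AddCircle.lintegral_preimage T b]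
    simp only [← AddCircle.coe_sub, hf.lift_coe]
  rw [lift, lintegral_sub_right_eq_self (fun x => hf.lift x), ← AddCircle.lintegral_preimage T c]
  simp only [hf.lift_coe]

section Geometry

variable {E : Type*} [SeminormedAddCommGroup E]

lemma rpow_mul_rpow_le_norm_sub {w z ζ : E} (hw : ‖w‖ = 1) (hζ : ‖ζ - z‖ ≤ 1 - ‖z‖)
    {a : ℝ} (ha0 : 0 ≤ a) (ha1 : a ≤ 1) :
    (1 - ‖z‖) ^ a * (‖w - ζ‖ / 2) ^ (1 - a) ≤ ‖w - z‖ := by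
  have h1 : 1 - ‖z‖ ≤ ‖w - z‖ := by
    have := norm_sub_norm_le w z
    linarith
  have h2 : ‖w - ζ‖ / 2 ≤ ‖w - z‖ := by
    have := norm_sub_le_norm_sub_add_norm_sub w z ζ
    rw [norm_sub_rev z ζ] at this
    linarith
  calc (1 - ‖z‖) ^ a * (‖w - ζ‖ / 2) ^ (1 - a)
      ≤ a * (1 - ‖z‖) + (1 - a) * (‖w - ζ‖ / 2) :=
        geom_mean_le_arith_mean2_weighted ha0 (by linarith) ((norm_nonneg _).trans hζ)
          (by positivity) (by ring)
    _ ≤ ‖w - z‖ := by nlinarith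

lemma enorm_sub_inv_le {w z ζ : E} (hw : ‖w‖ = 1) (hζ : ‖ζ - z‖ ≤ 1 - ‖z‖)
    {a : ℝ} (ha0 : 0 ≤ a) (ha1 : a ≤ 1) :
    ‖w - z‖ₑ⁻¹ ≤ ENNReal.ofReal (1 - ‖z‖) ^ (-a) * ENNReal.ofReal (‖w - ζ‖ / 2) ^ (-(1 - a)) := by
  have hz : 0 ≤ 1 - ‖z‖ := (norm_nonneg _).trans hζ
  rw [ENNReal.rpow_neg, ENNReal.rpow_neg,
    ← ENNReal.mul_inv (.inr (ENNReal.rpow_ne_top_of_nonneg (by linarith) ENNReal.ofReal_ne_top))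
      (.inl (ENNReal.rpow_ne_top_of_nonneg ha0 ENNReal.ofReal_ne_top)),
    ENNReal.inv_le_inv, ENNReal.ofReal_rpow_of_nonneg hz ha0,
    ENNReal.ofReal_rpow_of_nonneg (by positivity) (by linarith),
    ← ENNReal.ofReal_mul (by positivity), ← ofReal_norm]
  exact ENNReal.ofReal_le_ofReal (rpow_mul_rpow_le_norm_sub hw hζ ha0 ha1)

end Geometry

def expI (t : ℝ) : ℂ := Complex.exp (t * Complex.I)

lemma norm_expI (t : ℝ) : ‖expI t‖ = 1 := Complex.norm_exp_ofReal_mul_I t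

@[fun_prop]
lemma continuous_expI : Continuous expI := by
  unfold expI
  fun_prop

lemma expI_periodic : Function.Periodic expI (2 * π) := fun t => by
  simp only [expI, Complex.ofReal_add, add_mul, Complex.exp_add, Complex.ofReal_mul,
    Complex.ofReal_ofNat, Complex.exp_two_pi_mul_I, mul_one]

lemma expI_sub_expI (t θ : ℝ) : expI t - expI θ = expI θ * (expI (t - θ) - 1) := by
  rw [expI, expI, expI, mul_sub, mul_one, ← Complex.exp_add]
  push_cast
  ring_nf

lemma norm_expI_sub_one (t : ℝ) : ‖expI t - 1‖ = 2 * |sin (t / 2)| := by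
  rw [expI, mul_comm, Complex.norm_exp_I_mul_ofReal_sub_one, norm_mul, Real.norm_two,
    Real.norm_eq_abs]

lemma abs_div_pi_le_norm_expI_sub_one {t : ℝ} (ht : |t| ≤ π) : |t| / π ≤ ‖expI t - 1‖ / 2 := by
  have := Real.mul_abs_le_abs_sin (x := t / 2) (by rw [abs_div, abs_two]; linarith)
  rw [norm_expI_sub_one, abs_div, abs_two] at *
  calc |t| / π = 2 / π * (|t| / 2) := by ring
    _ ≤ 2 * |sin (t / 2)| / 2 := by linarith

lemma polarCoord_symm_eq_mul_expI (p : ℝ × ℝ) : Complex.polarCoord.symm p = p.1 * expI p.2 := by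
  rw [Complex.polarCoord_symm_apply, expI, Complex.exp_mul_I, Complex.ofReal_cos,
    Complex.ofReal_sin]

lemma norm_expI_sub_mul_expI {ρ : ℝ} (h0 : 0 ≤ ρ) (h1 : ρ ≤ 1) (θ : ℝ) :
    ‖expI θ - ρ * expI θ‖ = 1 - ‖(ρ : ℂ) * expI θ‖ := by
  rw [← one_sub_mul, norm_mul, norm_mul, norm_expI, mul_one, mul_one, Complex.norm_real,
    Real.norm_of_nonneg h0, ← Complex.ofReal_one, ← Complex.ofReal_sub, Complex.norm_real,
    Real.norm_of_nonneg (by linarith)]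

def circleKernelIntegral (s : ℝ) : ℝ≥0∞ :=
  ∫⁻ t in Ioc (-π) π, ENNReal.ofReal (‖expI t - 1‖ / 2) ^ (-s)

lemma setLIntegral_norm_expI_sub_rpow_neg {ζ : ℂ} (hζ : ‖ζ‖ = 1) (s b : ℝ) :
    ∫⁻ t in Ioc b (b + 2 * π), ENNReal.ofReal (‖expI t - ζ‖ / 2) ^ (-s)
      = circleKernelIntegral s := by
  obtain ⟨θ, rfl⟩ : ∃ θ, expI θ = ζ :=
    ⟨ζ.arg, by simpa [hζ, expI] using Complex.norm_mul_exp_arg_mul_I ζ⟩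
  have hper : Function.Periodic (fun u => ENNReal.ofReal (‖expI u - 1‖ / 2) ^ (-s)) (2 * π) :=
    fun u => by simp only [expI_periodic u]
  have h := hper.setLIntegral_Ioc_comp_sub (by positivity) θ b (-π)
  rw [show -π + 2 * π = π by ring] at h
  rw [circleKernelIntegral, ← h]
  refine setLIntegral_congr_fun measurableSet_Ioc fun t _ => ?_
  rw [expI_sub_expI, norm_mul, norm_expI, one_mul]

lemma circleKernelIntegral_lt_top {s : ℝ} (hs0 : 0 ≤ s) (hs1 : s < 1) :
    circleKernelIntegral s < ⊤ := by
  refine lt_of_le_of_lt (setLIntegral_mono' measurableSet_Ioc fun t ht => ?_)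
    (setLIntegral_ofReal_mul_abs_sub_rpow_neg_lt_top hs1 (inv_pos.mpr pi_pos) 0
      (by linarith [pi_pos] : -π ≤ π))
  refine ENNReal.rpow_neg_le_rpow_neg (ENNReal.ofReal_le_ofReal ?_) hs0
  rw [sub_zero, inv_mul_eq_div]
  exact abs_div_pi_le_norm_expI_sub_one (abs_le.mpr ⟨ht.1.le, ht.2⟩)

lemma setLIntegral_enorm_expI_sub_inv_le {z : ℂ} (hz : ‖z‖ ≤ 1) {a : ℝ} (ha0 : 0 ≤ a)
    (ha1 : a ≤ 1) :
    ∫⁻ t in Ioc 0 (2 * π), ‖expI t - z‖ₑ⁻¹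
      ≤ ENNReal.ofReal (1 - ‖z‖) ^ (-a) * circleKernelIntegral (1 - a) := by
  set θ := z.arg
  have hz' : (‖z‖ : ℂ) * expI θ = z := Complex.norm_mul_exp_arg_mul_I z
  have hζ : ‖expI θ - z‖ ≤ 1 - ‖z‖ := by
    conv_lhs => rw [← hz']
    rw [norm_expI_sub_mul_expI (norm_nonneg z) hz, hz']
  calc ∫⁻ t in Ioc 0 (2 * π), ‖expI t - z‖ₑ⁻¹
      ≤ ∫⁻ t in Ioc 0 (2 * π),
          ENNReal.ofReal (1 - ‖z‖) ^ (-a) * ENNReal.ofReal (‖expI t - expI θ‖ / 2) ^ (-(1 - a)) :=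
        lintegral_mono fun t => enorm_sub_inv_le (norm_expI t) hζ ha0 ha1
    _ = ENNReal.ofReal (1 - ‖z‖) ^ (-a) * circleKernelIntegral (1 - a) := by
        rw [lintegral_const_mul _ (by fun_prop),
          ← setLIntegral_norm_expI_sub_rpow_neg (norm_expI θ) (1 - a) 0, zero_add]

lemma ofReal_mul_indicator_ball_mul_expI_le {a : ℝ} (ha0 : 0 ≤ a) (ha1 : a ≤ 1) (c t : ℝ)
    {ρ : ℝ} (hρ : 0 < ρ) (φ : ℝ) :
    ENNReal.ofReal ρ * (ball (0 : ℂ) 1).indicator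
        (fun z => ENNReal.ofReal (1 - ‖z‖) ^ c * ‖expI t - z‖ₑ⁻¹) (ρ * expI φ)
      ≤ (Ioo 0 1).indicator (fun ρ => ENNReal.ofReal (1 - ρ) ^ (c - a)) ρ
        * ENNReal.ofReal (‖expI φ - expI t‖ / 2) ^ (-(1 - a)) := by
  have hnorm : ‖(ρ : ℂ) * expI φ‖ = ρ := by
    rw [norm_mul, norm_expI, mul_one, Complex.norm_real, Real.norm_of_nonneg hρ.le]
  rcases lt_or_ge ρ 1 with hρ1 | hρ1
  · rw [indicator_of_mem (by rwa [mem_ball_zero_iff, hnorm]),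
      indicator_of_mem (show ρ ∈ Ioo 0 1 from ⟨hρ, hρ1⟩), hnorm]
    have hker :=
      enorm_sub_inv_le (norm_expI t) (norm_expI_sub_mul_expI hρ.le hρ1.le φ).le ha0 ha1
    rw [hnorm] at hker
    calc ENNReal.ofReal ρ * (ENNReal.ofReal (1 - ρ) ^ c * ‖expI t - ρ * expI φ‖ₑ⁻¹)
        ≤ 1 * (ENNReal.ofReal (1 - ρ) ^ c * (ENNReal.ofReal (1 - ρ) ^ (-a)
            * ENNReal.ofReal (‖expI t - expI φ‖ / 2) ^ (-(1 - a)))) := by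
          gcongr
          exact ENNReal.ofReal_le_one.mpr hρ1.le
      _ = _ := by
          rw [one_mul, ← mul_assoc, ← ENNReal.rpow_add _ _
            (ENNReal.ofReal_pos.mpr (by linarith)).ne' ENNReal.ofReal_ne_top, ← sub_eq_add_neg,
            norm_sub_rev]
  · rw [indicator_of_notMem (by rw [mem_ball_zero_iff, hnorm]; exact hρ1.not_gt), mul_zero]
    exact zero_le

lemma setLIntegral_ball_rpow_mul_enorm_expI_sub_inv_le {a : ℝ} (ha0 : 0 ≤ a) (ha1 : a ≤ 1)
    (c t : ℝ) :
    ∫⁻ z in ball (0 : ℂ) 1, ENNReal.ofReal (1 - ‖z‖) ^ c * ‖expI t - z‖ₑ⁻¹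
      ≤ (∫⁻ ρ in Ioo 0 1, ENNReal.ofReal (1 - ρ) ^ (c - a)) * circleKernelIntegral (1 - a) := by
  set F : ℂ → ℝ≥0∞ := fun z => ENNReal.ofReal (1 - ‖z‖) ^ c * ‖expI t - z‖ₑ⁻¹
  set R : ℝ → ℝ≥0∞ := (Ioo 0 1).indicator fun ρ => ENNReal.ofReal (1 - ρ) ^ (c - a)
  set Θ : ℝ → ℝ≥0∞ := fun φ => ENNReal.ofReal (‖expI φ - expI t‖ / 2) ^ (-(1 - a))
  have hR : Measurable R := Measurable.indicator (by fun_prop) measurableSet_Ioo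
  have hΘ : Measurable Θ := by fun_prop
  calc ∫⁻ z in ball (0 : ℂ) 1, F z
      = ∫⁻ p in polarCoord.target,
          ENNReal.ofReal p.1 • (ball (0 : ℂ) 1).indicator F (Complex.polarCoord.symm p) := by
        rw [← lintegral_indicator measurableSet_ball, Complex.lintegral_comp_polarCoord_symm]
    _ ≤ ∫⁻ p in Ioi 0 ×ˢ Ioo (-π) π, R p.1 * Θ p.2 :=
        setLIntegral_mono' polarCoord.open_target.measurableSet fun p hp => by
          rw [polarCoord_symm_eq_mul_expI, smul_eq_mul]
          exact ofReal_mul_indicator_ball_mul_expI_le ha0 ha1 c t hp.1 p.2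
    _ = (∫⁻ ρ in Ioi 0, R ρ) * ∫⁻ φ in Ioo (-π) π, Θ φ := by
        rw [Measure.volume_eq_prod, ← Measure.prod_restrict]
        exact lintegral_prod_mul hR.aemeasurable hΘ.aemeasurable
    _ = _ := by
        rw [lintegral_indicator measurableSet_Ioo, Measure.restrict_restrict measurableSet_Ioo,
          inter_eq_self_of_subset_left Ioo_subset_Ioi_self,
          setLIntegral_congr (Ioo_ae_eq_Ioc (a := -π)),
          ← setLIntegral_norm_expI_sub_rpow_neg (norm_expI t) (1 - a) (-π),
          show -π + 2 * π = π by ring]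

lemma enorm_Aop_le (g : ℝ → ℂ) {z : ℂ} (hz : ‖z‖ < 1) :
    ‖Aop g z‖ₑ ≤ 2 * ∫⁻ t in Ioc 0 (2 * π), ‖expI t - z‖ₑ⁻¹ * ‖g t‖ₑ := by
  rw [Aop, intervalIntegral.integral_of_le (by positivity), ← lintegral_const_mul' _ _ (by simp)]
  refine (enorm_integral_le_lintegral_enorm _).trans (lintegral_mono fun t => ?_)
  have hne : expI t - z ≠ 0 := by
    rw [sub_ne_zero]
    rintro rfl
    simp [norm_expI] at hz
  have hadd : ‖expI t + z‖ₑ ≤ 2 := by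
    rw [← ofReal_norm, ← ENNReal.ofReal_ofNat]
    refine ENNReal.ofReal_le_ofReal ((norm_add_le _ _).trans ?_)
    rw [norm_expI]
    linarith
  change ‖(expI t + z) / (expI t - z) * g t‖ₑ ≤ _
  rw [div_eq_mul_inv, enorm_mul, enorm_mul, enorm_inv hne, ← mul_assoc]
  gcongr

lemma enorm_Aop_rpow_le {p a : ℝ} (hp : 1 < p) (ha0 : 0 ≤ a) (ha1 : a ≤ 1) {g : ℝ → ℂ}
    (hg : AEMeasurable (fun t => ‖g t‖ₑ) (volume.restrict (Ioc 0 (2 * π)))) {z : ℂ}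
    (hz : ‖z‖ < 1) :
    ‖Aop g z‖ₑ ^ p ≤ 2 ^ p * circleKernelIntegral (1 - a) ^ (p - 1)
      * (ENNReal.ofReal (1 - ‖z‖) ^ (-a * (p - 1))
        * ∫⁻ t in Ioc 0 (2 * π), ‖expI t - z‖ₑ⁻¹ * ‖g t‖ₑ ^ p) := by
  have hp0 : 0 ≤ p := by linarith
  have hK : AEMeasurable (fun t => ‖expI t - z‖ₑ⁻¹) (volume.restrict (Ioc 0 (2 * π))) := by
    fun_prop
  calc ‖Aop g z‖ₑ ^ p
      ≤ (2 * ∫⁻ t in Ioc 0 (2 * π), ‖expI t - z‖ₑ⁻¹ * ‖g t‖ₑ) ^ p :=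
        ENNReal.rpow_le_rpow (enorm_Aop_le g hz) hp0
    _ = 2 ^ p * (∫⁻ t in Ioc 0 (2 * π), ‖expI t - z‖ₑ⁻¹ * ‖g t‖ₑ) ^ p :=
        ENNReal.mul_rpow_of_nonneg _ _ hp0
    _ ≤ 2 ^ p * ((∫⁻ t in Ioc 0 (2 * π), ‖expI t - z‖ₑ⁻¹ * ‖g t‖ₑ ^ p)
          * (∫⁻ t in Ioc 0 (2 * π), ‖expI t - z‖ₑ⁻¹) ^ (p - 1)) := by
        gcongr
        exact lintegral_mul_rpow_le_lintegral_mul_rpow_mul hp hK hg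
    _ ≤ 2 ^ p * ((∫⁻ t in Ioc 0 (2 * π), ‖expI t - z‖ₑ⁻¹ * ‖g t‖ₑ ^ p)
          * (ENNReal.ofReal (1 - ‖z‖) ^ (-a) * circleKernelIntegral (1 - a)) ^ (p - 1)) := by
        gcongr
        exact setLIntegral_enorm_expI_sub_inv_le hz.le ha0 ha1
    _ = _ := by
        rw [ENNReal.mul_rpow_of_nonneg _ _ (by linarith), ← ENNReal.rpow_mul]
        ring

lemma setLIntegral_ball_rpow_mul_lintegral_le {a : ℝ} (ha0 : 0 ≤ a) (ha1 : a ≤ 1) (c : ℝ)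
    {f : ℝ → ℝ≥0∞} (hf : AEMeasurable f (volume.restrict (Ioc 0 (2 * π)))) :
    ∫⁻ z in ball (0 : ℂ) 1,
        ENNReal.ofReal (1 - ‖z‖) ^ c * ∫⁻ t in Ioc 0 (2 * π), ‖expI t - z‖ₑ⁻¹ * f t
      ≤ (∫⁻ ρ in Ioo 0 1, ENNReal.ofReal (1 - ρ) ^ (c - a)) * circleKernelIntegral (1 - a)
        * ∫⁻ t in Ioc 0 (2 * π), f t := by
  have hF : AEMeasurable
      (Function.uncurry fun z t => ENNReal.ofReal (1 - ‖z‖) ^ c * (‖expI t - z‖ₑ⁻¹ * f t))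
      ((volume.restrict (ball (0 : ℂ) 1)).prod (volume.restrict (Ioc 0 (2 * π)))) :=
    (Measurable.aemeasurable (by fun_prop)).mul
      ((Measurable.aemeasurable (by fun_prop)).mul hf.comp_snd)
  calc ∫⁻ z in ball (0 : ℂ) 1,
        ENNReal.ofReal (1 - ‖z‖) ^ c * ∫⁻ t in Ioc 0 (2 * π), ‖expI t - z‖ₑ⁻¹ * f t
      = ∫⁻ z in ball (0 : ℂ) 1, ∫⁻ t in Ioc 0 (2 * π),
          ENNReal.ofReal (1 - ‖z‖) ^ c * (‖expI t - z‖ₑ⁻¹ * f t) :=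
        lintegral_congr fun z =>
          (lintegral_const_mul'' _ ((Measurable.aemeasurable (by fun_prop)).mul hf)).symm
    _ = ∫⁻ t in Ioc 0 (2 * π),
          (∫⁻ z in ball (0 : ℂ) 1, ENNReal.ofReal (1 - ‖z‖) ^ c * ‖expI t - z‖ₑ⁻¹) * f t := by
        rw [lintegral_lintegral_swap hF]
        refine lintegral_congr fun t => ?_
        rw [← lintegral_mul_const'' _ (Measurable.aemeasurable (by fun_prop))]
        simp only [mul_assoc]
    _ ≤ ∫⁻ t in Ioc 0 (2 * π),
          (∫⁻ ρ in Ioo 0 1, ENNReal.ofReal (1 - ρ) ^ (c - a)) * circleKernelIntegral (1 - a)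
            * f t := by
        gcongr with t
        exact setLIntegral_ball_rpow_mul_enorm_expI_sub_inv_le ha0 ha1 c t
    _ = _ := lintegral_const_mul'' _ hf

lemma lintegral_ball_enorm_Aop_rpow_le {p a : ℝ} (hp : 1 < p) (ha0 : 0 < a) (ha1 : a ≤ 1)
    {g : ℝ → ℂ} (hg : AEStronglyMeasurable g (volume.restrict (Ioc 0 (2 * π)))) :
    ∫⁻ z in ball (0 : ℂ) 1, ‖Aop g z‖ₑ ^ p
      ≤ 2 ^ p * circleKernelIntegral (1 - a) ^ (p - 1)
        * ((∫⁻ ρ in Ioo 0 1, ENNReal.ofReal (1 - ρ) ^ (-(a * p))) * circleKernelIntegral (1 - a))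
        * ∫⁻ t in Ioc 0 (2 * π), ‖g t‖ₑ ^ p := by
  have hC : 2 ^ p * circleKernelIntegral (1 - a) ^ (p - 1) ≠ ⊤ := ENNReal.mul_ne_top
    (ENNReal.rpow_ne_top_of_nonneg (by linarith) ENNReal.ofNat_ne_top)
    (ENNReal.rpow_ne_top_of_nonneg (by linarith)
      (circleKernelIntegral_lt_top (by linarith) (by linarith)).ne)
  have hweight := setLIntegral_ball_rpow_mul_lintegral_le ha0.le ha1 (-a * (p - 1))
    (hg.enorm.pow_const p)
  rw [show -a * (p - 1) - a = -(a * p) by ring] at hweight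
  calc ∫⁻ z in ball (0 : ℂ) 1, ‖Aop g z‖ₑ ^ p
      ≤ ∫⁻ z in ball (0 : ℂ) 1, 2 ^ p * circleKernelIntegral (1 - a) ^ (p - 1)
          * (ENNReal.ofReal (1 - ‖z‖) ^ (-a * (p - 1))
            * ∫⁻ t in Ioc 0 (2 * π), ‖expI t - z‖ₑ⁻¹ * ‖g t‖ₑ ^ p) :=
        setLIntegral_mono' measurableSet_ball fun z hz =>
          enorm_Aop_rpow_le hp ha0.le ha1 hg.enorm (mem_ball_zero_iff.mp hz)
    _ ≤ _ := by
        rw [lintegral_const_mul' _ _ hC, mul_assoc _ _ (∫⁻ t in Ioc 0 (2 * π), ‖g t‖ₑ ^ p)]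
        gcongr

theorem exists_lintegral_ball_enorm_Aop_rpow_le {p : ℝ} (hp : 1 < p) :
    ∃ C : ℝ, 0 < C ∧ ∀ g : ℝ → ℂ, AEStronglyMeasurable g (volume.restrict (Ioc 0 (2 * π))) →
      ∫⁻ z in ball (0 : ℂ) 1, ‖Aop g z‖ₑ ^ p
        ≤ ENNReal.ofReal C * ∫⁻ t in Ioc 0 (2 * π), ‖g t‖ₑ ^ p := by
  set a := 1 / (2 * p)
  have ha0 : 0 < a := by positivity
  have hap : a * p = 1 / 2 := by
    simp only [a]
    field_simp
  have ha1 : a ≤ 1 := by nlinarith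
  have hE := (circleKernelIntegral_lt_top (s := 1 - a) (by linarith) (by linarith)).ne
  set Λ := 2 ^ p * circleKernelIntegral (1 - a) ^ (p - 1)
    * ((∫⁻ ρ in Ioo 0 1, ENNReal.ofReal (1 - ρ) ^ (-(a * p))) * circleKernelIntegral (1 - a))
  have hΛ : Λ ≠ ⊤ := by
    have hU := (setLIntegral_Ioo_ofReal_one_sub_rpow_neg_lt_top (s := a * p) (by linarith)).ne
    exact ENNReal.mul_ne_top (ENNReal.mul_ne_top
      (ENNReal.rpow_ne_top_of_nonneg (by linarith) ENNReal.ofNat_ne_top)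
      (ENNReal.rpow_ne_top_of_nonneg (by linarith) hE)) (ENNReal.mul_ne_top hU hE)
  refine ⟨Λ.toReal + 1, by positivity, fun g hg =>
    (lintegral_ball_enorm_Aop_rpow_le hp ha0 ha1 hg).trans ?_⟩
  gcongr
  exact (ENNReal.le_ofReal_iff_toReal_le hΛ (by positivity)).mpr (by linarith)

/-- for `0 < σ ≤ 1` and `1/σ < p < ∞` there is a constant `C = C(p)` such that
for every `g ∈ L^p(𝕋)`, `‖A(g)‖_{L^p(𝔻)} ≤ C ‖g‖_{L^p(𝕋)}`. -/
theorem statement0 (p : ℝ)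
    (hp : ∃ σ : ℝ, 0 < σ ∧ σ ≤ 1 ∧ 1 / σ < p) :
    ∃ C : ℝ, 0 < C ∧ ∀ g : ℝ → ℂ, Function.Periodic g (2 * Real.pi) →
      MemLp g (ENNReal.ofReal p) (volume.restrict (Ioc (0:ℝ) (2 * Real.pi))) →
      (∫⁻ z in ball (0:ℂ) 1, ENNReal.ofReal (‖Aop g z‖ ^ p)) ^ (1/p)
        ≤ ENNReal.ofReal C *
          (∫⁻ t in Ioc (0:ℝ) (2 * Real.pi), ENNReal.ofReal (‖g t‖ ^ p)) ^ (1/p) := by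
  obtain ⟨σ, hσ0, hσ1, hσp⟩ := hp
  have hp1 : 1 < p := (one_le_one_div hσ0 hσ1).trans_lt hσp
  have hp0 : 0 < p := by linarith
  obtain ⟨C, hC, hbound⟩ := exists_lintegral_ball_enorm_Aop_rpow_le hp1
  refine ⟨C ^ (1 / p), by positivity, fun g _ hg => ?_⟩
  simp only [← ENNReal.ofReal_rpow_of_nonneg (norm_nonneg _) hp0.le, ofReal_norm]
  rw [← ENNReal.ofReal_rpow_of_nonneg hC.le (by positivity),
    ← ENNReal.mul_rpow_of_nonneg _ _ (by positivity)]
  exact ENNReal.rpow_le_rpow (hbound g hg.aestronglyMeasurable) (by positivity)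
end
end

section
/- Let Π⊂ℂ be an open half-plane and let x,y∈Π. Let m₁,m₂,m₃∈ℕ₀ with m₁+m₂−m₃>2. Then the integral ∫_{ℂ∖Π} (conj(w−y))^{m₃} / ((x−w)^{m₁}·(w−y)^{m₂}) dm(w) is absolutely convergent and equals 0. -/
open MeasureTheory Set Filter Complex Topology
open scoped ENNReal

noncomputable section


lemma aux_lb {a b A B : ℝ} (ha : 0 < a) (hb : 0 ≤ b) (hB : 0 ≤ B)
    (h1 : a ≤ A) (h2 : B ≤ A + b) : a / (1 + a + b) * (1 + B) ≤ A := by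
  rw [div_mul_eq_mul_div, div_le_iff₀ (by linarith)]
  nlinarith [mul_le_mul_of_nonneg_left h2 ha.le, mul_le_mul_of_nonneg_right h1 hb]

lemma rpow3 {u : ℝ} (hu : 0 ≤ u) : (1 + u) ^ (-(3:ℝ)) = ((1 + u) ^ (3:ℕ))⁻¹ := by
  rw [Real.rpow_neg (by linarith), show ((3:ℝ)) = ((3:ℕ):ℝ) by norm_num, Real.rpow_natCast]

lemma bound_aux {n d₁ d₂ : ℂ} {u K c₁ c₂ : ℝ} (hu : 1 ≤ u)
    {m₁ m₂ m₃ : ℕ} (hm : m₃ + 3 ≤ m₁ + m₂) (hK : 0 < K) (hc₁ : 0 < c₁) (hc₂ : 0 < c₂)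
    (hn : ‖n‖ ≤ K * u) (h1 : c₁ * u ≤ ‖d₁‖) (h2 : c₂ * u ≤ ‖d₂‖) :
    ‖n ^ m₃ / (d₁ ^ m₁ * d₂ ^ m₂)‖ ≤ K ^ m₃ / (c₁ ^ m₁ * c₂ ^ m₂) / u ^ 3 := by
  have hu0 : (0:ℝ) < u := lt_of_lt_of_le one_pos hu
  rw [norm_div, norm_mul, norm_pow, norm_pow, norm_pow]
  have step : ‖n‖ ^ m₃ / (‖d₁‖ ^ m₁ * ‖d₂‖ ^ m₂) ≤ (K*u) ^ m₃ / ((c₁*u) ^ m₁ * (c₂*u) ^ m₂) :=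
    div_le_div₀ (by positivity) (pow_le_pow_left₀ (norm_nonneg _) hn _) (by positivity)
      (mul_le_mul (pow_le_pow_left₀ (by positivity) h1 _) (pow_le_pow_left₀ (by positivity) h2 _)
        (by positivity) (by positivity))
  refine step.trans ?_
  have hpow : u ^ m₃ * u ^ 3 ≤ u ^ m₁ * u ^ m₂ := by
    rw [← pow_add, ← pow_add]; exact pow_le_pow_right₀ hu (by omega)
  rw [mul_pow, mul_pow, mul_pow, div_le_div_iff₀ (by positivity) (by positivity)]
  rw [div_mul_eq_mul_div, le_div_iff₀ (by positivity)]
  nlinarith [mul_le_mul_of_nonneg_left hpow (by positivity : (0:ℝ) ≤ K ^ m₃ * (c₁ ^ m₁ * c₂ ^ m₂))]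

lemma keyA (f : ℂ → ℂ) (C : ℝ)
    (hd : ∀ z : ℂ, z.im ≤ 0 → DifferentiableAt ℂ f z)
    (hb : ∀ z : ℂ, z.im ≤ 0 → ‖f z‖ ≤ C / (1 + ‖z‖) ^ 3) :
    Integrable (fun s : ℝ => f s) ∧ ∫ s : ℝ, f s = 0 := by
  have hC : 0 ≤ C := by
    have h := hb 0 le_rfl
    have h0 : (0:ℝ) ≤ ‖f 0‖ := norm_nonneg _
    simp only [norm_zero, add_zero, one_pow, div_one] at h
    linarith
  have hcont : Continuous fun s : ℝ => f s := by
    refine continuous_iff_continuousAt.2 fun s => ?_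
    exact (hd s (by simp)).continuousAt.comp Complex.continuous_ofReal.continuousAt
  have hint : Integrable (fun s : ℝ => f s) := by
    refine ((integrable_one_add_norm (μ := (volume : Measure ℝ))
        (by simp : ((Module.finrank ℝ ℝ : ℝ)) < 3)).const_mul C).mono'
        hcont.aestronglyMeasurable (Eventually.of_forall fun s => ?_)
    have h := hb s (by simp)
    rw [Real.norm_eq_abs, rpow3 (abs_nonneg s)]
    calc ‖f ↑s‖ ≤ C / (1 + ‖(s:ℂ)‖) ^ 3 := h
      _ = C * ((1 + |s|) ^ (3:ℕ))⁻¹ := by rw [Complex.norm_real, Real.norm_eq_abs, div_eq_mul_inv]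
  refine ⟨hint, ?_⟩
  have key : ∀ R : ℝ, 1 ≤ R → ‖∫ x in (-R)..R, f x‖ ≤ 4 * C / R := by
    intro R hR
    have hR0 : (0:ℝ) < R := lt_of_lt_of_le one_pos hR
    have hrect := Complex.integral_boundary_rect_eq_zero_of_differentiableOn f
      (⟨-R, -R⟩ : ℂ) (⟨R, 0⟩ : ℂ) ?rectdiff
    case rectdiff =>
      intro z hz
      rw [Complex.mem_reProdIm] at hz
      have him : z.im ≤ 0 := by
        have := hz.2
        rw [Set.uIcc_of_le (by linarith : -R ≤ (0:ℝ))] at this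
        exact this.2
      exact (hd z him).differentiableWithinAt
    simp only [Complex.ofReal_zero, zero_mul, add_zero] at hrect
    -- hrect : ∫ x in -R..R, f (x + (-R)*I) - ∫ x in -R..R, f x + I • ∫ ... - I • ∫ ... = 0
    have hbnd : ∀ p : ℂ, p.im ≤ 0 → R ≤ ‖p‖ → ‖f p‖ ≤ C / (1 + R) ^ 3 := by
      intro p hp hnp
      have h1R : (1:ℝ) + R ≤ 1 + ‖p‖ := by linarith
      refine (hb p hp).trans ?_
      gcongr
    have hbot : ‖∫ x : ℝ in (-R)..R, f (x + (-R:ℝ) * I)‖ ≤ C / (1 + R) ^ 3 * (2*R) := by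
      have := intervalIntegral.norm_integral_le_of_norm_le_const
        (C := C / (1 + R) ^ 3) (a := -R) (b := R) (f := fun x : ℝ => f (x + (-R:ℝ) * I)) ?_
      · calc ‖∫ x : ℝ in (-R)..R, f (x + (-R:ℝ) * I)‖ ≤ C / (1+R)^3 * |R - (-R)| := this
          _ = C / (1 + R) ^ 3 * (2*R) := by rw [_root_.abs_of_nonneg (by linarith : (0:ℝ) ≤ R - -R)]; ring
      · intro x _
        refine hbnd _ (by simp [hR0.le]) ?_
        calc R = |(-R:ℝ)| := by rw [abs_neg, _root_.abs_of_nonneg hR0.le]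
          _ = |((x:ℂ) + (-R:ℝ)*I).im| := by simp
          _ ≤ ‖(x:ℂ) + (-R:ℝ)*I‖ := Complex.abs_im_le_norm _
    have hside : ∀ c : ℝ, |c| = R → ‖∫ y : ℝ in (-R)..(0:ℝ), f (c + y * I)‖ ≤ C / (1 + R) ^ 3 * R := by
      intro c hc
      have := intervalIntegral.norm_integral_le_of_norm_le_const
        (C := C / (1 + R) ^ 3) (a := -R) (b := (0:ℝ)) (f := fun y : ℝ => f (c + y * I)) ?_
      · calc ‖∫ y : ℝ in (-R)..(0:ℝ), f (c + y*I)‖ ≤ C / (1+R)^3 * |0 - (-R)| := this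
          _ = C / (1 + R) ^ 3 * R := by rw [show (0:ℝ) - (-R) = R by ring, _root_.abs_of_nonneg hR0.le]
      · intro y hy
        rw [Set.uIoc_of_le (by linarith : -R ≤ (0:ℝ))] at hy
        refine hbnd _ (by simpa using hy.2) ?_
        calc R = |c| := hc.symm
          _ = |((c:ℂ) + y*I).re| := by simp
          _ ≤ ‖(c:ℂ) + y*I‖ := Complex.abs_re_le_norm _
    have heq : ∫ x in (-R)..R, f x = (∫ x : ℝ in (-R)..R, f (x + (-R:ℝ) * I))
        + I • (∫ y : ℝ in (-R)..(0:ℝ), f (R + y * I))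
        - I • (∫ y : ℝ in (-R)..(0:ℝ), f ((-R:ℝ) + y * I)) := by
      have : ((⟨-R,-R⟩ : ℂ)).re = -R := rfl
      linear_combination (norm := module) -hrect
    rw [heq]
    have h1 := hside R (_root_.abs_of_nonneg hR0.le)
    have h2 := hside (-R) (by rw [abs_neg, _root_.abs_of_nonneg hR0.le])
    calc ‖(∫ x : ℝ in (-R)..R, f (x + (-R:ℝ) * I))
        + I • (∫ y : ℝ in (-R)..(0:ℝ), f (R + y * I))
        - I • (∫ y : ℝ in (-R)..(0:ℝ), f ((-R:ℝ) + y * I))‖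
        ≤ ‖(∫ x : ℝ in (-R)..R, f (x + (-R:ℝ) * I))
            + I • (∫ y : ℝ in (-R)..(0:ℝ), f (R + y * I))‖
          + ‖I • (∫ y : ℝ in (-R)..(0:ℝ), f ((-R:ℝ) + y * I))‖ := norm_sub_le _ _
      _ ≤ ‖(∫ x : ℝ in (-R)..R, f (x + (-R:ℝ) * I))‖
          + ‖I • (∫ y : ℝ in (-R)..(0:ℝ), f (R + y * I))‖
          + ‖I • (∫ y : ℝ in (-R)..(0:ℝ), f ((-R:ℝ) + y * I))‖ := by
            gcongr; exact norm_add_le _ _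
      _ ≤ C / (1 + R) ^ 3 * (2*R) + C / (1 + R) ^ 3 * R + C / (1 + R) ^ 3 * R := by
            rw [norm_smul, norm_smul, Complex.norm_I, one_mul, one_mul]
            gcongr
      _ = 4 * (C * R) / (1 + R) ^ 3 := by ring
      _ ≤ 4 * C / R := by
            rw [div_le_div_iff₀ (by positivity) hR0]
            have hRc : R ^ 2 ≤ (1 + R) ^ 3 := by nlinarith [sq_nonneg R]
            nlinarith [mul_le_mul_of_nonneg_left hRc hC]
  have h1 : Tendsto (fun R : ℝ => ∫ x in (-R)..R, f x) atTop (𝓝 (∫ s : ℝ, f s)) :=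
    intervalIntegral_tendsto_integral hint tendsto_neg_atTop_atBot tendsto_id
  have h2 : Tendsto (fun R : ℝ => ∫ x in (-R)..R, f x) atTop (𝓝 0) := by
    refine squeeze_zero_norm' (a := fun R : ℝ => 4 * C / R) ?_ ?_
    · filter_upwards [eventually_ge_atTop (1:ℝ)] with R hR using key R hR
    · exact tendsto_const_nhds.div_atTop tendsto_id
  exact tendsto_nhds_unique h1 h2

lemma lemB (x y : ℂ) (hx : 0 < x.im) (hy : 0 < y.im) (m₁ m₂ m₃ : ℕ) (hm : m₃ + 2 < m₁ + m₂) :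
    IntegrableOn (fun t : ℂ => (starRingEnd ℂ) (t - y) ^ m₃ / ((x - t) ^ m₁ * (t - y) ^ m₂))
      {t : ℂ | t.im ≤ 0} volume ∧
    ∫ t in {t : ℂ | t.im ≤ 0},
      (starRingEnd ℂ) (t - y) ^ m₃ / ((x - t) ^ m₁ * (t - y) ^ m₂) = 0 := by
  have hm3 : m₃ + 3 ≤ m₁ + m₂ := hm
  set g : ℂ → ℂ := fun t => (starRingEnd ℂ) (t - y) ^ m₃ / ((x - t) ^ m₁ * (t - y) ^ m₂) with hgdef
  set H : Set ℂ := {t : ℂ | t.im ≤ 0} with hHdef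
  have hHmeas : MeasurableSet H := measurableSet_le Complex.measurable_im measurable_const
  have hxne : ∀ t ∈ H, x - t ≠ 0 := by
    intro t ht h0
    have h1 := congrArg Complex.im h0
    simp only [Complex.sub_im, Complex.zero_im] at h1
    have ht' : t.im ≤ 0 := ht
    linarith
  have hyne : ∀ t ∈ H, t - y ≠ 0 := by
    intro t ht h0
    have h1 := congrArg Complex.im h0
    simp only [Complex.sub_im, Complex.zero_im] at h1
    have ht' : t.im ≤ 0 := ht
    linarith
  have hcont : ContinuousOn g H := by
    apply ContinuousOn.div
    · exact ((Complex.continuous_conj.comp (continuous_id.sub continuous_const)).pow m₃).continuousOn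
    · exact (((continuous_const.sub continuous_id).pow m₁).mul
        ((continuous_id.sub continuous_const).pow m₂)).continuousOn
    · intro t ht
      exact mul_ne_zero (pow_ne_zero _ (hxne t ht)) (pow_ne_zero _ (hyne t ht))
  set c₁ : ℝ := x.im / (1 + x.im + ‖x‖) with hc₁def
  set c₂ : ℝ := y.im / (1 + y.im + ‖y‖) with hc₂def
  set K : ℝ := 1 + ‖y‖ with hKdef
  have hc₁ : 0 < c₁ := div_pos hx (by positivity)
  have hc₂ : 0 < c₂ := div_pos hy (by positivity)
  have hK : 0 < K := by positivity
  set Cb : ℝ := K ^ m₃ / (c₁ ^ m₁ * c₂ ^ m₂) with hCbdef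
  have hbound : ∀ t ∈ H, ‖g t‖ ≤ Cb / (1 + ‖t‖) ^ 3 := by
    intro t ht
    have ht' : t.im ≤ 0 := ht
    have hu : (1:ℝ) ≤ 1 + ‖t‖ := by linarith [norm_nonneg t]
    refine bound_aux hu hm3 hK hc₁ hc₂ ?_ ?_ ?_
    · rw [show ‖(starRingEnd ℂ) (t - y)‖ = ‖t - y‖ from RCLike.norm_conj _]
      calc ‖t - y‖ ≤ ‖t‖ + ‖y‖ := norm_sub_le _ _
        _ ≤ K * (1 + ‖t‖) := by rw [hKdef]; nlinarith [norm_nonneg t, norm_nonneg y]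
    · refine aux_lb hx (norm_nonneg x) (norm_nonneg t) ?_ ?_
      · calc x.im ≤ (x - t).im := by rw [Complex.sub_im]; linarith
          _ ≤ |(x - t).im| := le_abs_self _
          _ ≤ ‖x - t‖ := Complex.abs_im_le_norm _
      · calc ‖t‖ = ‖x - (x - t)‖ := by congr 1; ring
          _ ≤ ‖x‖ + ‖x - t‖ := norm_sub_le _ _
          _ = ‖x - t‖ + ‖x‖ := by ring
    · refine aux_lb hy (norm_nonneg y) (norm_nonneg t) ?_ ?_
      · calc y.im ≤ -(t - y).im := by rw [Complex.sub_im]; linarith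
          _ ≤ |(t - y).im| := neg_le_abs _
          _ ≤ ‖t - y‖ := Complex.abs_im_le_norm _
      · calc ‖t‖ = ‖(t - y) + y‖ := by congr 1; ring
          _ ≤ ‖t - y‖ + ‖y‖ := norm_add_le _ _
  have hmaj : Integrable (fun t : ℂ => Cb * (1 + ‖t‖) ^ (-(3:ℝ))) volume := by
    refine Integrable.const_mul ?_ Cb
    exact integrable_one_add_norm (by rw [Complex.finrank_real_complex]; norm_num)
  have hInt : IntegrableOn g H volume := by
    refine Integrable.mono' (hmaj.restrict (s := H)) (hcont.aestronglyMeasurable hHmeas) ?_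
    rw [ae_restrict_iff' hHmeas]
    refine Eventually.of_forall fun t ht => ?_
    rw [rpow3 (norm_nonneg t), ← div_eq_mul_inv]
    exact hbound t ht
  refine ⟨hInt, ?_⟩
  -- transfer to ℝ × ℝ
  set G : ℝ × ℝ → ℂ := fun p => g (↑p.1 + ↑p.2 * I) with hGdef
  have hGg : (G ∘ Complex.measurableEquivRealProd) = g := by
    funext z
    simp only [G, Function.comp_apply, Complex.measurableEquivRealProd_apply]
    rw [Complex.re_add_im]
  have hpre : Complex.measurableEquivRealProd ⁻¹' (univ ×ˢ Iic (0:ℝ)) = H := by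
    ext z
    simp only [mem_preimage, Complex.measurableEquivRealProd_apply, mem_prod, mem_univ,
      mem_Iic, true_and, hHdef, mem_setOf_eq]
  have emb := Complex.measurableEquivRealProd.measurableEmbedding
  have mp := Complex.volume_preserving_equiv_real_prod
  have hmeas_prod : (volume : Measure (ℝ × ℝ)).restrict (univ ×ˢ Iic (0:ℝ))
      = (volume : Measure ℝ).prod ((volume : Measure ℝ).restrict (Iic 0)) := by
    rw [Measure.volume_eq_prod, ← Measure.prod_restrict, Measure.restrict_univ]
  have hGint : IntegrableOn G (univ ×ˢ Iic (0:ℝ)) volume := by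
    rw [← mp.integrableOn_comp_preimage emb, hpre, hGg]
    exact hInt
  have h1 : ∫ t in H, g t = ∫ p in (univ ×ˢ Iic (0:ℝ)), G p := by
    rw [← mp.setIntegral_preimage_emb emb G (univ ×ˢ Iic (0:ℝ)), hpre]
    exact setIntegral_congr_fun hHmeas fun z _ => congrFun hGg.symm z
  rw [h1]
  have hGint' : Integrable G ((volume : Measure ℝ).prod ((volume : Measure ℝ).restrict (Iic 0))) := by
    rw [← hmeas_prod]; exact hGint
  have h2 : ∫ p in (univ ×ˢ Iic (0:ℝ)), G p
      = ∫ τ in Iic (0:ℝ), ∫ s : ℝ, G (s, τ) := by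
    rw [show (∫ p in (univ ×ˢ Iic (0:ℝ)), G p)
        = ∫ p, G p ∂((volume : Measure ℝ).prod ((volume : Measure ℝ).restrict (Iic 0))) from by
      rw [← hmeas_prod]]
    exact integral_prod_symm G hGint'
  rw [h2]
  have hinner : ∀ τ ∈ Iic (0:ℝ), ∫ s : ℝ, G (s, τ) = 0 := by
    intro τ hτ
    have hτ' : τ ≤ 0 := hτ
    set F : ℂ → ℂ := fun z =>
      (z - ↑τ * I - (starRingEnd ℂ) y) ^ m₃
        / ((x - z - ↑τ * I) ^ m₁ * (z + ↑τ * I - y) ^ m₂) with hFdef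
    have hFG : ∀ s : ℝ, F ↑s = G (s, τ) := by
      intro s
      simp only [hFdef, hGdef, hgdef]
      have e1 : (starRingEnd ℂ) ((↑s + ↑τ * I) - y)
          = ↑s - ↑τ * I - (starRingEnd ℂ) y := by
        simp only [map_sub, map_add, map_mul, Complex.conj_ofReal, Complex.conj_I]
        ring
      rw [e1]
      congr 1
      ring
    have hd1 : ∀ z : ℂ, z.im ≤ 0 → x - z - ↑τ * I ≠ 0 := by
      intro z hz h0
      have h1 := congrArg Complex.im h0
      simp only [Complex.sub_im, Complex.mul_im, Complex.ofReal_re, Complex.ofReal_im,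
        Complex.I_im, Complex.I_re, Complex.zero_im, mul_one, mul_zero, zero_mul, add_zero,
        zero_add] at h1
      linarith
    have hd2 : ∀ z : ℂ, z.im ≤ 0 → z + ↑τ * I - y ≠ 0 := by
      intro z hz h0
      have h1 := congrArg Complex.im h0
      simp only [Complex.sub_im, Complex.add_im, Complex.mul_im, Complex.ofReal_re,
        Complex.ofReal_im, Complex.I_im, Complex.I_re, Complex.zero_im, mul_one, mul_zero,
        zero_mul, add_zero, zero_add] at h1
      linarith
    have hdiff : ∀ z : ℂ, z.im ≤ 0 → DifferentiableAt ℂ F z := by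
      intro z hz
      refine DifferentiableAt.div ?_ ?_
        (mul_ne_zero (pow_ne_zero _ (hd1 z hz)) (pow_ne_zero _ (hd2 z hz)))
      · exact ((differentiableAt_id.sub_const _).sub_const _).pow _
      · exact ((((differentiableAt_const x).sub differentiableAt_id).sub_const _).pow _).mul
          (((differentiableAt_id.add_const _).sub_const _).pow _)
    have habs : ‖(↑τ * I : ℂ)‖ = |τ| := by
      rw [norm_mul, Complex.norm_I, mul_one, Complex.norm_real, Real.norm_eq_abs]
    have hbF : ∀ z : ℂ, z.im ≤ 0 →
        ‖F z‖ ≤ ((1 + |τ| + ‖y‖) ^ m₃ / ((x.im / (1 + x.im + (‖x‖ + |τ|))) ^ m₁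
          * (y.im / (1 + y.im + (‖y‖ + |τ|))) ^ m₂)) / (1 + ‖z‖) ^ 3 := by
      intro z hz
      have hu : (1:ℝ) ≤ 1 + ‖z‖ := by linarith [norm_nonneg z]
      refine bound_aux hu hm3 (by positivity)
        (div_pos hx (by positivity)) (div_pos hy (by positivity)) ?_ ?_ ?_
      · calc ‖z - ↑τ * I - (starRingEnd ℂ) y‖
            ≤ ‖z - ↑τ * I‖ + ‖(starRingEnd ℂ) y‖ := norm_sub_le _ _
          _ ≤ ‖z‖ + ‖(↑τ * I : ℂ)‖ + ‖(starRingEnd ℂ) y‖ := by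
              gcongr
              exact norm_sub_le _ _
          _ = ‖z‖ + |τ| + ‖y‖ := by rw [habs, RCLike.norm_conj]
          _ ≤ (1 + |τ| + ‖y‖) * (1 + ‖z‖) := by
              nlinarith [norm_nonneg z, norm_nonneg y, abs_nonneg τ]
      · refine aux_lb hx (by positivity) (norm_nonneg z) ?_ ?_
        · calc x.im ≤ (x - z - ↑τ * I).im := by
                  simp only [Complex.sub_im, Complex.mul_im, Complex.ofReal_re, Complex.ofReal_im,
                    Complex.I_im, Complex.I_re, mul_one, mul_zero, zero_mul, add_zero, zero_add]
                  linarith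
            _ ≤ |(x - z - ↑τ * I).im| := le_abs_self _
            _ ≤ ‖x - z - ↑τ * I‖ := Complex.abs_im_le_norm _
        · calc ‖z‖ = ‖x - ↑τ * I - (x - z - ↑τ * I)‖ := by congr 1; ring
            _ ≤ ‖x - ↑τ * I‖ + ‖x - z - ↑τ * I‖ := norm_sub_le _ _
            _ ≤ (‖x‖ + ‖(↑τ * I : ℂ)‖) + ‖x - z - ↑τ * I‖ := by
                gcongr
                exact norm_sub_le _ _
            _ = ‖x - z - ↑τ * I‖ + (‖x‖ + |τ|) := by rw [habs]; ring
      · refine aux_lb hy (by positivity) (norm_nonneg z) ?_ ?_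
        · calc y.im ≤ -(z + ↑τ * I - y).im := by
                  simp only [Complex.sub_im, Complex.add_im, Complex.mul_im, Complex.ofReal_re,
                    Complex.ofReal_im, Complex.I_im, Complex.I_re, mul_one, mul_zero, zero_mul,
                    add_zero, zero_add]
                  linarith
            _ ≤ |(z + ↑τ * I - y).im| := neg_le_abs _
            _ ≤ ‖z + ↑τ * I - y‖ := Complex.abs_im_le_norm _
        · calc ‖z‖ = ‖(z + ↑τ * I - y) - ↑τ * I + y‖ := by congr 1; ring
            _ ≤ ‖(z + ↑τ * I - y) - ↑τ * I‖ + ‖y‖ := norm_add_le _ _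
            _ ≤ (‖z + ↑τ * I - y‖ + ‖(↑τ * I : ℂ)‖) + ‖y‖ := by
                gcongr
                exact norm_sub_le _ _
            _ = ‖z + ↑τ * I - y‖ + (‖y‖ + |τ|) := by rw [habs]; ring
    have hkey := keyA F _ hdiff hbF
    calc ∫ s : ℝ, G (s, τ) = ∫ s : ℝ, F ↑s :=
        integral_congr_ae (Eventually.of_forall fun s => (hFG s).symm)
      _ = 0 := hkey.2
  rw [setIntegral_congr_fun measurableSet_Iic hinner]
  simp

/-- if `Π` is an open half-plane, `x, y ∈ Π` and `m₁, m₂, m₃ ∈ ℕ₀` with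
`m₁ + m₂ - m₃ > 2`, then `∫_{ℂ∖Π} conj(w-y)^{m₃} / ((x-w)^{m₁} (w-y)^{m₂}) dm(w)` is
absolutely convergent and equals `0`. -/
theorem statement7 (a v : ℂ) (hv : v ≠ 0)
    (x y : ℂ) (hx : x ∈ {z : ℂ | 0 < ((z - a) / v).im})
    (hy : y ∈ {z : ℂ | 0 < ((z - a) / v).im})
    (m₁ m₂ m₃ : ℕ) (hm : m₃ + 2 < m₁ + m₂) :
    IntegrableOn
      (fun w : ℂ => (starRingEnd ℂ) (w - y) ^ m₃ / ((x - w) ^ m₁ * (w - y) ^ m₂))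
      {z : ℂ | 0 < ((z - a) / v).im}ᶜ volume ∧
    ∫ w in {z : ℂ | 0 < ((z - a) / v).im}ᶜ,
        (starRingEnd ℂ) (w - y) ^ m₃ / ((x - w) ^ m₁ * (w - y) ^ m₂) = 0 := by
  have hvn : (0:ℝ) < ‖v‖ := norm_pos_iff.2 hv
  set u : ℂ := v / ‖v‖ with hudef
  have hun : ‖u‖ = 1 := by
    rw [hudef, norm_div, Complex.norm_real, Real.norm_eq_abs, abs_of_pos hvn,
      div_self hvn.ne']
  have hu0 : u ≠ 0 := by
    intro h; rw [h, norm_zero] at hun; norm_num at hun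
  set c : Circle := ⟨u, mem_sphere_zero_iff_norm.2 hun⟩ with hcdef
  have hcu : (c : ℂ) = u := rfl
  -- the affine map ψ
  set ψ : ℂ → ℂ := fun t => a + u * t with hψdef
  have hψmp : MeasurePreserving ψ volume volume := by
    have h1 : MeasurePreserving (fun w : ℂ => a + w) volume volume :=
      measurePreserving_add_left volume a
    have h2 : MeasurePreserving (rotation c) volume volume :=
      (rotation c).measurePreserving
    have h3 := h1.comp h2
    have he : ψ = (fun w : ℂ => a + w) ∘ (rotation c) := by
      funext t; simp [hψdef, rotation_apply, hcu, Function.comp]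
    rw [he]
    exact h3
  have hψemb : MeasurableEmbedding ψ := by
    have he : ψ = (fun w : ℂ => a + w) ∘ (rotation c) := by
      funext t; simp [hψdef, rotation_apply, hcu, Function.comp]
    rw [he]
    exact (Homeomorph.addLeft a).measurableEmbedding.comp
      (rotation c).toHomeomorph.measurableEmbedding
  -- normalized points
  set x' : ℂ := (x - a) / u with hx'def
  set y' : ℂ := (y - a) / u with hy'def
  -- preimage of the set
  have hvnC : ((‖v‖:ℝ):ℂ) ≠ 0 := by
    simpa using hvn.ne'
  have hdiv : ∀ w : ℂ, (w / u) = ((‖v‖:ℝ):ℂ) * (w / v) := by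
    intro w
    rw [hudef]
    field_simp
  have him : ∀ w : ℂ, ((w - a) / u).im = ‖v‖ * ((w - a) / v).im := by
    intro w
    rw [hdiv]
    simp [Complex.mul_im]
  have hx' : 0 < x'.im := by
    rw [hx'def, him]; exact mul_pos hvn hx
  have hy' : 0 < y'.im := by
    rw [hy'def, him]; exact mul_pos hvn hy
  have hpre : ψ ⁻¹' ({z : ℂ | 0 < ((z - a) / v).im}ᶜ) = {t : ℂ | t.im ≤ 0} := by
    ext t
    simp only [mem_preimage, mem_compl_iff, mem_setOf_eq, not_lt, hψdef]
    have e1 : ((a + u * t - a) / v).im = t.im / ‖v‖ := by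
      rw [add_sub_cancel_left]
      have e2 : u * t / v = t / ((‖v‖:ℝ):ℂ) := by
        rw [hudef]
        rw [div_mul_eq_mul_div, div_div, div_eq_div_iff (mul_ne_zero hvnC hv) hvnC]
        ring
      rw [e2, Complex.div_ofReal_im]
    rw [e1, div_le_iff₀ hvn, zero_mul]
  set f : ℂ → ℂ := fun w => (starRingEnd ℂ) (w - y) ^ m₃ / ((x - w) ^ m₁ * (w - y) ^ m₂)
    with hfdef
  set g : ℂ → ℂ := fun t => (starRingEnd ℂ) (t - y') ^ m₃ / ((x' - t) ^ m₁ * (t - y') ^ m₂)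
    with hgdef
  set d : ℂ := (starRingEnd ℂ) u ^ m₃ / u ^ (m₁ + m₂) with hddef
  have hcomp : ∀ t : ℂ, f (ψ t) = d * g t := by
    intro t
    simp only [hfdef, hgdef, hψdef, hddef]
    clear_value u x' y'
    have hux : u * x' = x - a := by
      rw [hx'def, mul_comm, div_mul_cancel₀ _ hu0]
    have huy : u * y' = y - a := by
      rw [hy'def, mul_comm, div_mul_cancel₀ _ hu0]
    have e1 : a + u * t - y = u * (t - y') := by
      rw [mul_sub, huy]; ring
    have e2 : x - (a + u * t) = u * (x' - t) := by
      rw [mul_sub, hux]; ring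
    rw [e1, e2, map_mul, mul_pow, mul_pow, mul_pow, pow_add, div_mul_div_comm]
    congr 1
    ring
  obtain ⟨hBint, hBzero⟩ := lemB x' y' hx' hy' m₁ m₂ m₃ hm
  have hgint : IntegrableOn (fun t => f (ψ t)) {t : ℂ | t.im ≤ 0} volume := by
    have : IntegrableOn (fun t => d * g t) {t : ℂ | t.im ≤ 0} volume :=
      hBint.const_mul d
    exact this.congr_fun (fun t _ => (hcomp t).symm) (measurableSet_le Complex.measurable_im
      measurable_const)
  have h1 : IntegrableOn f ({z : ℂ | 0 < ((z - a) / v).im}ᶜ) volume := by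
    refine (hψmp.integrableOn_comp_preimage hψemb).mp ?_
    rw [hpre]
    exact hgint
  refine ⟨h1, ?_⟩
  have h2 : ∫ w in ({z : ℂ | 0 < ((z - a) / v).im}ᶜ), f w
      = ∫ t in {t : ℂ | t.im ≤ 0}, f (ψ t) := by
    rw [← hψmp.setIntegral_preimage_emb hψemb f _, hpre]
  rw [h2]
  calc ∫ t in {t : ℂ | t.im ≤ 0}, f (ψ t)
      = ∫ t in {t : ℂ | t.im ≤ 0}, d * g t :=
        setIntegral_congr_fun (measurableSet_le Complex.measurable_im measurable_const)
          fun t _ => hcomp t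
    _ = d * ∫ t in {t : ℂ | t.im ≤ 0}, g t := integral_const_mul d g
    _ = 0 := by rw [hBzero, mul_zero]
end
end
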